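/- (Sublinear rate for gradient mapping) Let f be convex, differentiable, L-smooth, g convex, F = f + g, with F bounded below and attaining minimum F*. Consider iterates x^{k+1} = prox_{g,U^k}(x^k − (U^k)⁻¹∇f(x^k)) where each U^k is symmetric with U^k ⪰ L·I, and define G_{U^k}(x^k) = U^k(x^k − x^{k+1}). Then for any K ≥ 1: min_{k=0,…,K−1} ‖G_{U^k}(x^k)‖²_{(U^k)⁻¹} ≤ 2(F(x⁰) − F*)/K. -/

import Mathlib

noncomputable section

/-- Euclidean dot product on `Fin n → ℝ`. -/
def dot {n : ℕ} (a b : Fin n → ℝ) : ℝ := ∑ i, a i * b i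

/-- Squared Euclidean norm. -/
def sqnorm {n : ℕ} (a : Fin n → ℝ) : ℝ := dot a a

/-!
Each step decreases `F = f + g` by at least `½‖xᵏ - xᵏ⁺¹‖²_{Uᵏ}`: the descent lemma together with
`Uᵏ ⪰ L·I` bounds `f (xᵏ⁺¹)`, and the optimality condition of the proximal subproblem (compare
`xᵏ⁺¹` with the points of the segment towards `xᵏ` and use convexity of `g`) bounds `g (xᵏ⁺¹)`.
As `‖G_U(x)‖²_{U⁻¹} = ‖x - x⁺‖²_U`, the decreases telescope to at most `F(x⁰) - F*`, and the
smallest of the first `K` of them is at most their average.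
-/

open Matrix Filter Topology

theorem image_one_le_of_deriv_le_add_mul {φ φ' : ℝ → ℝ} {M : ℝ}
    (hφ : ∀ t, HasDerivAt φ (φ' t) t) (hφ' : ∀ t ∈ Set.Ico (0 : ℝ) 1, φ' t ≤ φ' 0 + M * t) :
    φ 1 ≤ φ 0 + φ' 0 + M / 2 := by
  have hB : ∀ t : ℝ, HasDerivAt (fun s => φ 0 + φ' 0 * s + M / 2 * s ^ 2) (φ' 0 + M * t) t :=
    fun t => (((hasDerivAt_id' t).const_mul (φ' 0)).const_add (φ 0)).add
      ((hasDerivAt_pow 2 t).const_mul (M / 2)) |>.congr_deriv (by norm_num; ring)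
  simpa using image_le_of_deriv_right_le_deriv_boundary
    (fun t _ => (hφ t).continuousAt.continuousWithinAt) (fun t _ => (hφ t).hasDerivWithinAt)
    (by simp) (fun t _ => (hB t).continuousAt.continuousWithinAt)
    (fun t _ => (hB t).hasDerivWithinAt) hφ' (Set.right_mem_Icc.2 zero_le_one)

theorem le_of_forall_le_add_mul {a b c : ℝ} (h : ∀ t, 0 < t → t ≤ 1 → a ≤ b + t * c) :
    a ≤ b := by
  have hlim : Tendsto (fun t : ℝ => b + t * c) (𝓝[>] 0) (𝓝 b) :=
    (Continuous.tendsto' (by fun_prop) 0 b (by simp)).mono_left nhdsWithin_le_nhds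
  exact ge_of_tendsto hlim <|
    mem_of_superset (Ioc_mem_nhdsGT zero_lt_one) fun t ht => h t ht.1 ht.2

lemma dot_eq_dotProduct {n : ℕ} (a b : Fin n → ℝ) : dot a b = a ⬝ᵥ b := rfl

namespace Matrix

theorem posDef_of_posSemidef_sub_smul_one {ι : Type*} [DecidableEq ι] {U : Matrix ι ι ℝ}
    {L : ℝ} (hL : 0 < L) (hUL : (U - L • 1).PosSemidef) : U.PosDef := by
  simpa using PosDef.posSemidef_add hUL (PosDef.one.smul hL)

variable {ι : Type*} [Fintype ι]

theorem dotProduct_le_sqrt_mul_sqrt (a b : ι → ℝ) : a ⬝ᵥ b ≤ √(a ⬝ᵥ a) * √(b ⬝ᵥ b) := by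
  simpa [dotProduct, sq] using Real.sum_mul_le_sqrt_mul_sqrt Finset.univ a b

theorem IsSymm.dotProduct_mulVec_comm {U : Matrix ι ι ℝ} (hU : U.IsSymm) (a b : ι → ℝ) :
    a ⬝ᵥ U *ᵥ b = b ⬝ᵥ U *ᵥ a := by
  rw [dotProduct_mulVec, ← mulVec_transpose, hU.eq, dotProduct_comm]

theorem IsSymm.dotProduct_mulVec_sub_smul {U : Matrix ι ι ℝ} (hU : U.IsSymm) (w d : ι → ℝ)
    (t : ℝ) : (w - t • d) ⬝ᵥ U *ᵥ (w - t • d)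
      = w ⬝ᵥ U *ᵥ w - 2 * t * (d ⬝ᵥ U *ᵥ w) + t ^ 2 * (d ⬝ᵥ U *ᵥ d) := by
  simp only [mulVec_sub, mulVec_smul, dotProduct_sub, sub_dotProduct, smul_dotProduct,
    dotProduct_smul, smul_eq_mul, hU.dotProduct_mulVec_comm w d]
  ring

end Matrix

section ProximalGradient

variable {ι : Type*} [Fintype ι]

theorem hasDerivAt_comp_line {f : (ι → ℝ) → ℝ} {f' : (ι → ℝ) → ι → ℝ}
    (hdiff : ∀ x v, HasDerivAt (fun t : ℝ => f (x + t • v)) (f' x ⬝ᵥ v) 0) (x v : ι → ℝ)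
    (t : ℝ) : HasDerivAt (fun s : ℝ => f (x + s • v)) (f' (x + t • v) ⬝ᵥ v) t := by
  have hline : (fun s : ℝ => f (x + s • v)) = fun s => f (x + t • v + (s - t) • v) := by
    funext s
    congr 1
    module
  rw [hline]
  exact HasDerivAt.comp_sub_const t t (by simpa using hdiff (x + t • v) v)

theorem descent_lemma {f : (ι → ℝ) → ℝ} {f' : (ι → ℝ) → ι → ℝ} {L : ℝ}
    (hdiff : ∀ x v, HasDerivAt (fun t : ℝ => f (x + t • v)) (f' x ⬝ᵥ v) 0)
    (hsmooth : ∀ x y, √((f' x - f' y) ⬝ᵥ (f' x - f' y)) ≤ L * √((x - y) ⬝ᵥ (x - y)))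
    (x v : ι → ℝ) : f (x + v) ≤ f x + f' x ⬝ᵥ v + L / 2 * (v ⬝ᵥ v) := by
  have hslope : ∀ t ∈ Set.Ico (0 : ℝ) 1,
      f' (x + t • v) ⬝ᵥ v ≤ f' (x + (0 : ℝ) • v) ⬝ᵥ v + L * (v ⬝ᵥ v) * t := by
    intro t ht
    have hLip := hsmooth (x + t • v) x
    rw [add_sub_cancel_left, dotProduct_smul, smul_dotProduct, smul_eq_mul, smul_eq_mul,
      ← mul_assoc, ← sq, Real.sqrt_mul (sq_nonneg t), Real.sqrt_sq ht.1] at hLip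
    have hv : √(v ⬝ᵥ v) * √(v ⬝ᵥ v) = v ⬝ᵥ v :=
      Real.mul_self_sqrt (by simpa using dotProduct_star_self_nonneg v)
    calc f' (x + t • v) ⬝ᵥ v
        = f' x ⬝ᵥ v + (f' (x + t • v) - f' x) ⬝ᵥ v := by rw [sub_dotProduct]; ring
      _ ≤ f' x ⬝ᵥ v + L * (t * √(v ⬝ᵥ v)) * √(v ⬝ᵥ v) := by
        gcongr
        exact (dotProduct_le_sqrt_mul_sqrt _ _).trans
          (mul_le_mul_of_nonneg_right hLip (Real.sqrt_nonneg _))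
      _ = f' (x + (0 : ℝ) • v) ⬝ᵥ v + L * (v ⬝ᵥ v) * t := by
        rw [zero_smul, add_zero]
        linear_combination L * t * hv
  have h := image_one_le_of_deriv_le_add_mul (hasDerivAt_comp_line hdiff x v) hslope
  simp only [zero_smul, add_zero, one_smul] at h
  linarith

theorem dotProduct_mulVec_le_of_isMinOn {g : (ι → ℝ) → ℝ} {U : Matrix ι ι ℝ}
    (hg : ConvexOn ℝ Set.univ g) (hU : U.IsSymm) {z p : ι → ℝ}
    (hp : IsMinOn (fun v => g v + 1 / 2 * ((z - v) ⬝ᵥ U *ᵥ (z - v))) Set.univ p)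
    (y : ι → ℝ) : (y - p) ⬝ᵥ U *ᵥ (z - p) ≤ g y - g p := by
  set d := y - p
  refine le_of_forall_le_add_mul (c := (d ⬝ᵥ U *ᵥ d) / 2) fun t ht0 ht1 => ?_
  have hmin := isMinOn_iff.1 hp _ (Set.mem_univ (p + t • d))
  have hconv : g (p + t • d) ≤ (1 - t) * g p + t * g y := by
    have h := hg.2 (Set.mem_univ p) (Set.mem_univ y) (sub_nonneg.2 ht1) ht0.le (by ring)
    rwa [show (1 - t) • p + t • y = p + t • d by module, smul_eq_mul, smul_eq_mul] at h
  simp only [show z - (p + t • d) = (z - p) - t • d by abel,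
    hU.dotProduct_mulVec_sub_smul] at hmin
  have h : t * (d ⬝ᵥ U *ᵥ (z - p)) ≤ t * (g y - g p + t * ((d ⬝ᵥ U *ᵥ d) / 2)) := by
    nlinarith
  exact le_of_mul_le_mul_left h ht0

theorem proxGradient_sufficient_decrease [DecidableEq ι] {f g : (ι → ℝ) → ℝ}
    {f' : (ι → ℝ) → ι → ℝ} {L : ℝ} (hL : 0 < L) (hg : ConvexOn ℝ Set.univ g)
    (hdiff : ∀ x v, HasDerivAt (fun t : ℝ => f (x + t • v)) (f' x ⬝ᵥ v) 0)
    (hsmooth : ∀ x y, √((f' x - f' y) ⬝ᵥ (f' x - f' y)) ≤ L * √((x - y) ⬝ᵥ (x - y)))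
    {U : Matrix ι ι ℝ} (hUL : (U - L • 1).PosSemidef) {x p : ι → ℝ}
    (hp : IsMinOn (fun v => g v + 1 / 2 *
        ((x - U⁻¹ *ᵥ f' x - v) ⬝ᵥ U *ᵥ (x - U⁻¹ *ᵥ f' x - v))) Set.univ p) :
    f p + g p + 1 / 2 * ((x - p) ⬝ᵥ U *ᵥ (x - p)) ≤ f x + g x := by
  set d := x - p
  have hU := posDef_of_posSemidef_sub_smul_one hL hUL
  have hquad : L * (d ⬝ᵥ d) ≤ d ⬝ᵥ U *ᵥ d := by
    have h := hUL.dotProduct_mulVec_nonneg d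
    simp only [star_trivial, sub_mulVec, dotProduct_sub, smul_mulVec, one_mulVec,
      dotProduct_smul, smul_eq_mul] at h
    linarith
  have hf : f p ≤ f x - f' x ⬝ᵥ d + L / 2 * (d ⬝ᵥ d) := by
    have h := descent_lemma hdiff hsmooth x (-d)
    rwa [show x + -d = p by simp [d], dotProduct_neg, neg_dotProduct, dotProduct_neg, neg_neg,
      ← sub_eq_add_neg] at h
  have hgrad : U *ᵥ (x - U⁻¹ *ᵥ f' x - p) = U *ᵥ d - f' x := by
    rw [sub_right_comm, mulVec_sub, mulVec_mulVec,
      mul_nonsing_inv _ hU.det_pos.ne'.isUnit, one_mulVec]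
  have hprox := dotProduct_mulVec_le_of_isMinOn hg
    (isHermitian_iff_isSymm.1 hU.isHermitian) hp x
  rw [hgrad, dotProduct_sub] at hprox
  rw [dotProduct_comm] at hf
  linarith

end ProximalGradient

theorem exists_lt_le_div_of_add_le {a c : ℕ → ℝ} {m : ℝ} (hdec : ∀ k, a (k + 1) + c k ≤ a k)
    (hm : ∀ k, m ≤ a k) {K : ℕ} (hK : 0 < K) : ∃ k < K, c k ≤ (a 0 - m) / K := by
  have hsum : ∑ k ∈ Finset.range K, c k ≤ ∑ _k ∈ Finset.range K, (a 0 - m) / K := by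
    calc ∑ k ∈ Finset.range K, c k ≤ ∑ k ∈ Finset.range K, (a k - a (k + 1)) :=
          Finset.sum_le_sum fun k _ => by linarith [hdec k]
      _ = a 0 - a K := Finset.sum_range_sub' a K
      _ ≤ a 0 - m := by linarith [hm K]
      _ = ∑ _k ∈ Finset.range K, (a 0 - m) / K := by
        rw [Finset.sum_const, Finset.card_range, nsmul_eq_mul]
        field_simp
  obtain ⟨k, hk, hle⟩ := Finset.exists_le_of_sum_le (Finset.nonempty_range_iff.2 hK.ne') hsum
  exact ⟨k, Finset.mem_range.1 hk, hle⟩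

theorem sublinear_rate_gradient_mapping_general {n : ℕ} (f g : (Fin n → ℝ) → ℝ)
    (f' : (Fin n → ℝ) → (Fin n → ℝ)) (L : ℝ) (hL : 0 < L)
    (hgconv : ConvexOn ℝ Set.univ g)
    (hdiff : ∀ x v, HasDerivAt (fun t : ℝ => f (x + t • v)) (dot (f' x) v) 0)
    (hsmooth : ∀ x y, Real.sqrt (sqnorm (f' x - f' y)) ≤ L * Real.sqrt (sqnorm (x - y)))
    (Fstar : ℝ) (hFstar : ∀ z, Fstar ≤ f z + g z)
    (xs : ℕ → (Fin n → ℝ)) (Us : ℕ → Matrix (Fin n) (Fin n) ℝ)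
    (hUL : ∀ k, (Us k - L • (1 : Matrix (Fin n) (Fin n) ℝ)).PosSemidef)
    (hiter : ∀ k, IsMinOn (fun v => g v + (1 / 2) *
        dot ((xs k - (Us k)⁻¹.mulVec (f' (xs k))) - v)
            ((Us k).mulVec ((xs k - (Us k)⁻¹.mulVec (f' (xs k))) - v)))
      Set.univ (xs (k + 1))) :
    ∀ K : ℕ, 1 ≤ K → ∃ k < K,
      dot ((Us k).mulVec (xs k - xs (k + 1)))
          ((Us k)⁻¹.mulVec ((Us k).mulVec (xs k - xs (k + 1))))
        ≤ 2 * (f (xs 0) + g (xs 0) - Fstar) / K := by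
  intro K hK
  obtain ⟨k, hk, hle⟩ := exists_lt_le_div_of_add_le (a := fun k => f (xs k) + g (xs k))
    (fun k => proxGradient_sufficient_decrease hL hgconv hdiff hsmooth (hUL k) (hiter k))
    (fun k => hFstar (xs k)) hK
  refine ⟨k, hk, ?_⟩
  have hU := posDef_of_posSemidef_sub_smul_one hL (hUL k)
  rw [dot_eq_dotProduct, mulVec_mulVec, nonsing_inv_mul _ hU.det_pos.ne'.isUnit, one_mulVec,
    dotProduct_comm, mul_div_assoc]
  linarith

theorem sublinear_rate_gradient_mapping {n : ℕ} (f g : (Fin n → ℝ) → ℝ)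
    (f' : (Fin n → ℝ) → (Fin n → ℝ)) (L : ℝ) (hL : 0 < L)
    (hfconv : ConvexOn ℝ Set.univ f) (hgconv : ConvexOn ℝ Set.univ g)
    (hdiff : ∀ x v, HasDerivAt (fun t : ℝ => f (x + t • v)) (dot (f' x) v) 0)
    (hsmooth : ∀ x y, Real.sqrt (sqnorm (f' x - f' y)) ≤ L * Real.sqrt (sqnorm (x - y)))
    (Fstar : ℝ) (hFstar : ∀ z, Fstar ≤ f z + g z)
    (hattain : ∃ xstar, f xstar + g xstar = Fstar)
    (xs : ℕ → (Fin n → ℝ)) (Us : ℕ → Matrix (Fin n) (Fin n) ℝ)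
    (hUsymm : ∀ k, (Us k).IsSymm)
    (hUL : ∀ k, (Us k - L • (1 : Matrix (Fin n) (Fin n) ℝ)).PosSemidef)
    (hiter : ∀ k, IsMinOn (fun v => g v + (1 / 2) *
        dot ((xs k - (Us k)⁻¹.mulVec (f' (xs k))) - v)
            ((Us k).mulVec ((xs k - (Us k)⁻¹.mulVec (f' (xs k))) - v)))
      Set.univ (xs (k + 1))) :
    ∀ K : ℕ, 1 ≤ K → ∃ k < K,
      dot ((Us k).mulVec (xs k - xs (k + 1)))
          ((Us k)⁻¹.mulVec ((Us k).mulVec (xs k - xs (k + 1))))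
        ≤ 2 * (f (xs 0) + g (xs 0) - Fstar) / K :=
  sublinear_rate_gradient_mapping_general f g f' L hL hgconv hdiff hsmooth Fstar hFstar xs Us hUL
    hiter
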